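/- Let B₁ and B₂ be simple skew left braces and α : (B₂,∘) → Aut(B₁,+,∘) a non-trivial group homomorphism such that for every a ∈ B₂ with a ≠ 0, the map α_a is not an inner automorphism of the group (B₁,∘) (i.e. α_a ≠ i_g for every g ∈ B₁, where i_g(h) := g⁻ ∘ h ∘ g). Suppose moreover that B₁ is not a trivial skew left brace. Then the semidirect product B₁ ⋊_α B₂ is strongly prime and is not simple. -/

import Mathlib

/-- A *skew left brace* is a set with two group structures `(B,+)` and `(B,∘)`
(the latter written multiplicatively) satisfying `a∘(b+c) = a∘b - a + a∘c`.
The two identity elements automatically coincide. -/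
class SkewLeftBrace (B : Type*) extends AddGroup B, Group B where
  mul_add_eq : ∀ a b c : B, a * (b + c) = a * b - a + a * c

namespace SkewLeftBrace

variable {B : Type*} [SkewLeftBrace B]

/-- The map `λ_a : b ↦ -a + a∘b`. -/
def lmap (a b : B) : B := -a + a * b

/-- The brace star operation `a*b := -a + a∘b - b`. -/
def bstar (a b : B) : B := -a + a * b - b

/-- `X*Y`: the additive subgroup generated by all `bstar x y`, `x ∈ X`, `y ∈ Y`,
regarded as a set. -/
def setStar (X Y : Set B) : Set B :=
  ↑(AddSubgroup.closure {z : B | ∃ x ∈ X, ∃ y ∈ Y, z = bstar x y})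

/-- Pointwise sum of two subsets. -/
def setSum (X Y : Set B) : Set B := {w : B | ∃ x ∈ X, ∃ y ∈ Y, w = x + y}

/-- `X^Z := {z + x - z : x ∈ X, z ∈ Z}`. -/
def setConj (X Z : Set B) : Set B := {w : B | ∃ x ∈ X, ∃ z ∈ Z, w = z + x + -z}

/-- An ideal of a skew left brace: a subgroup of `(B,+)` which is normal in both
`(B,+)` and `(B,∘)` and invariant under all the maps `λ_a`. -/
structure IsIdeal (I : Set B) : Prop where
  zero_mem : (0 : B) ∈ I
  add_mem : ∀ ⦃x y : B⦄, x ∈ I → y ∈ I → x + y ∈ I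
  neg_mem : ∀ ⦃x : B⦄, x ∈ I → -x ∈ I
  add_conj_mem : ∀ (b : B) ⦃x : B⦄, x ∈ I → b + x + -b ∈ I
  mul_mem : ∀ ⦃x y : B⦄, x ∈ I → y ∈ I → x * y ∈ I
  inv_mem : ∀ ⦃x : B⦄, x ∈ I → x⁻¹ ∈ I
  mul_conj_mem : ∀ (b : B) ⦃x : B⦄, x ∈ I → b * x * b⁻¹ ∈ I
  lmap_mem : ∀ (a : B) ⦃x : B⦄, x ∈ I → lmap a x ∈ I

/-- A minimal ideal: a nonzero ideal whose only sub-ideals are `{0}` and itself. -/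
def IsMinimalIdeal (I : Set B) : Prop :=
  IsIdeal I ∧ I ≠ {0} ∧ ∀ J : Set B, IsIdeal J → J ⊆ I → J = {0} ∨ J = I

theorem mul_zero' (a : B) : a * (0 : B) = a := by
  have h := SkewLeftBrace.mul_add_eq a (0 : B) (0 : B)
  rw [add_zero] at h
  have h2 : a * (0:B) - a = 0 := (right_eq_add.mp h)
  exact sub_eq_zero.mp h2

theorem zero_eq_one : (0 : B) = 1 := by
  have h := mul_zero' (1 : B)
  rw [one_mul] at h
  exact h

theorem IsIdeal.one_mem {I : Set B} (h : IsIdeal I) : (1 : B) ∈ I :=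
  (zero_eq_one (B := B)) ▸ h.zero_mem

variable (B) in
/-- A skew left brace is *semiprime* if `I*I ≠ {0}` for every nonzero ideal `I`. -/
def Semiprime : Prop := ∀ I : Set B, IsIdeal I → I ≠ {0} → setStar I I ≠ {0}

variable (B) in
/-- A skew left brace is *prime*... (and) *simple* if its only ideals are `{0}` and `B`,
and these are distinct. -/
def Simple : Prop :=
  ({0} : Set B) ≠ Set.univ ∧ ∀ I : Set B, IsIdeal I → I = {0} ∨ I = Set.univ

variable (B) in
/-- A skew left brace is *Artinian* if every descending chain of ideals stabilizes. -/
def Artinian : Prop :=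
  ∀ f : ℕ → Set B, (∀ n, IsIdeal (f n)) → (∀ n, f (n + 1) ⊆ f n) →
    ∃ N, ∀ n, N ≤ n → f n = f N

/-- The `*`-products of copies of a fixed set `I`. -/
inductive IsStarPowerOf (I : Set B) : Set B → Prop
  | base : IsStarPowerOf I I
  | star {X Y : Set B} : IsStarPowerOf I X → IsStarPowerOf I Y →
      IsStarPowerOf I (setStar X Y)

variable (B) in
/-- A skew left brace is *strongly semiprime* if for every nonzero ideal `I`, every
`*`-product of copies of `I` is nonzero. -/
def StronglySemiprime : Prop :=
  ∀ I : Set B, IsIdeal I → I ≠ {0} → ∀ X : Set B, IsStarPowerOf I X → X ≠ {0}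

/-- The `*`-products of nonzero ideals. -/
inductive IsStarProdOfNonzeroIdeals : Set B → Prop
  | ideal {I : Set B} : IsIdeal I → I ≠ {0} → IsStarProdOfNonzeroIdeals I
  | star {X Y : Set B} : IsStarProdOfNonzeroIdeals X → IsStarProdOfNonzeroIdeals Y →
      IsStarProdOfNonzeroIdeals (setStar X Y)

variable (B) in
/-- A skew left brace is *strongly prime* if every `*`-product of nonzero ideals is nonzero. -/
def StronglyPrime : Prop :=
  ∀ X : Set B, IsStarProdOfNonzeroIdeals X → X ≠ {0}

end SkewLeftBrace
namespace SkewLeftBrace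

variable {B : Type*} [SkewLeftBrace B]

/-- An ideal, regarded as a skew left brace with the restricted operations. -/
def IsIdeal.brace {I : Set B} (h : IsIdeal I) : SkewLeftBrace I :=
  letI : Zero I := ⟨⟨0, h.zero_mem⟩⟩
  letI : Add I := ⟨fun x y => ⟨x.1 + y.1, h.add_mem x.2 y.2⟩⟩
  letI : Neg I := ⟨fun x => ⟨-x.1, h.neg_mem x.2⟩⟩
  letI : One I := ⟨⟨1, h.one_mem⟩⟩
  letI : Mul I := ⟨fun x y => ⟨x.1 * y.1, h.mul_mem x.2 y.2⟩⟩
  letI : Inv I := ⟨fun x => ⟨x.1⁻¹, h.inv_mem x.2⟩⟩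
  { add := (· + ·)
    zero := 0
    neg := (- ·)
    nsmul := nsmulRec
    zsmul := zsmulRec
    add_assoc := fun a b c => Subtype.ext (add_assoc a.1 b.1 c.1)
    zero_add := fun a => Subtype.ext (zero_add a.1)
    add_zero := fun a => Subtype.ext (add_zero a.1)
    neg_add_cancel := fun a => Subtype.ext (neg_add_cancel a.1)
    mul := (· * ·)
    one := 1
    inv := (·⁻¹)
    npow := npowRec
    zpow := zpowRec
    mul_assoc := fun a b c => Subtype.ext (mul_assoc a.1 b.1 c.1)
    one_mul := fun a => Subtype.ext (one_mul a.1)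
    mul_one := fun a => Subtype.ext (mul_one a.1)
    inv_mul_cancel := fun a => Subtype.ext (inv_mul_cancel a.1)
    mul_add_eq := fun a b c =>
      Subtype.ext (by
        show a.1 * (b.1 + c.1) = a.1 * b.1 + -a.1 + a.1 * c.1
        rw [SkewLeftBrace.mul_add_eq, sub_eq_add_neg]) }

/-- The direct product of two skew left braces, with componentwise operations. -/
def prodBrace (B₁ B₂ : Type*) [SkewLeftBrace B₁] [SkewLeftBrace B₂] :
    SkewLeftBrace (B₁ × B₂) :=
  { (inferInstance : AddGroup (B₁ × B₂)), (inferInstance : Group (B₁ × B₂)) with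
    mul_add_eq := fun a b c =>
      Prod.ext (by simp [SkewLeftBrace.mul_add_eq]) (by simp [SkewLeftBrace.mul_add_eq]) }

/-- Two skew left braces are isomorphic if there is a bijection preserving `+` and `∘`. -/
def IsBraceIsomorphic (A C : Type*) [SkewLeftBrace A] [SkewLeftBrace C] : Prop :=
  ∃ f : A ≃ C, (∀ x y : A, f (x + y) = f x + f y) ∧ (∀ x y : A, f (x * y) = f x * f y)

/-- A group homomorphism from `(B₂,∘)` to the automorphism group `Aut(B₁,+,∘)` of the
skew left brace `B₁`, presented as an action `act : B₂ → B₁ → B₁` by skew left brace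
automorphisms. -/
structure BraceActionHom (B₂ B₁ : Type*) [SkewLeftBrace B₂] [SkewLeftBrace B₁] where
  act : B₂ → B₁ → B₁
  act_bijective : ∀ a : B₂, Function.Bijective (act a)
  act_add : ∀ (a : B₂) (x y : B₁), act a (x + y) = act a x + act a y
  act_mul : ∀ (a : B₂) (x y : B₁), act a (x * y) = act a x * act a y
  act_hom : ∀ (a b : B₂) (x : B₁), act (a * b) x = act a (act b x)
  act_one : ∀ x : B₁, act (1 : B₂) x = x

variable {B₁ B₂ : Type*} [SkewLeftBrace B₁] [SkewLeftBrace B₂]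

theorem BraceActionHom.act_one' (α : BraceActionHom B₂ B₁) (a : B₂) :
    α.act a (1 : B₁) = 1 := by
  have h := α.act_mul a 1 1
  rw [mul_one] at h
  exact mul_eq_left.mp h.symm

/-- The underlying type of the semidirect product of two skew left braces. -/
@[ext]
structure SDP (B₁ B₂ : Type*) where
  fst : B₁
  snd : B₂

/-- The semidirect product `B₁ ⋊_α B₂` of skew left braces: the additive group is the
direct product, while `(a₁,a₂) ∘ (b₁,b₂) = (a₁ ∘ α_{a₂}(b₁), a₂ ∘ b₂)`. -/
def BraceActionHom.sdp (α : BraceActionHom B₂ B₁) : SkewLeftBrace (SDP B₁ B₂) :=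
  letI : Zero (SDP B₁ B₂) := ⟨⟨0, 0⟩⟩
  letI : Add (SDP B₁ B₂) := ⟨fun p q => ⟨p.fst + q.fst, p.snd + q.snd⟩⟩
  letI : Neg (SDP B₁ B₂) := ⟨fun p => ⟨-p.fst, -p.snd⟩⟩
  letI : One (SDP B₁ B₂) := ⟨⟨1, 1⟩⟩
  letI : Mul (SDP B₁ B₂) := ⟨fun p q => ⟨p.fst * α.act p.snd q.fst, p.snd * q.snd⟩⟩
  letI : Inv (SDP B₁ B₂) := ⟨fun p => ⟨α.act p.snd⁻¹ p.fst⁻¹, p.snd⁻¹⟩⟩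
  { add := (· + ·)
    zero := 0
    neg := (- ·)
    nsmul := nsmulRec
    zsmul := zsmulRec
    add_assoc := fun a b c =>
      SDP.ext (add_assoc a.fst b.fst c.fst) (add_assoc a.snd b.snd c.snd)
    zero_add := fun a => SDP.ext (zero_add a.fst) (zero_add a.snd)
    add_zero := fun a => SDP.ext (add_zero a.fst) (add_zero a.snd)
    neg_add_cancel := fun a => SDP.ext (neg_add_cancel a.fst) (neg_add_cancel a.snd)
    mul := (· * ·)
    one := 1
    inv := (·⁻¹)
    npow := npowRec
    zpow := zpowRec
    mul_assoc := fun a b c =>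
      SDP.ext
        (by show (a.fst * α.act a.snd b.fst) * α.act (a.snd * b.snd) c.fst =
              a.fst * α.act a.snd (b.fst * α.act b.snd c.fst)
            rw [α.act_hom, α.act_mul, mul_assoc])
        (mul_assoc a.snd b.snd c.snd)
    one_mul := fun a =>
      SDP.ext (by show (1 : B₁) * α.act 1 a.fst = a.fst; rw [α.act_one, one_mul])
        (one_mul a.snd)
    mul_one := fun a =>
      SDP.ext (by show a.fst * α.act a.snd (1 : B₁) = a.fst; rw [α.act_one', mul_one])
        (mul_one a.snd)
    inv_mul_cancel := fun a =>
      SDP.ext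
        (by show α.act a.snd⁻¹ a.fst⁻¹ * α.act a.snd⁻¹ a.fst = 1
            rw [← α.act_mul, inv_mul_cancel, α.act_one'])
        (inv_mul_cancel a.snd)
    mul_add_eq := fun a b c =>
      SDP.ext
        (by show a.fst * α.act a.snd (b.fst + c.fst) =
              a.fst * α.act a.snd b.fst + -a.fst + a.fst * α.act a.snd c.fst
            rw [α.act_add, SkewLeftBrace.mul_add_eq, sub_eq_add_neg])
        (by show a.snd * (b.snd + c.snd) = a.snd * b.snd + -a.snd + a.snd * c.snd
            rw [SkewLeftBrace.mul_add_eq, sub_eq_add_neg]) }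

end SkewLeftBrace

open SkewLeftBrace

/-! The ideal `B₁ × {0}` of `B₁ ⋊_α B₂` lies in every nonzero ideal `I`. Indeed the elements of `I`
of the form `(x, 0)` form an ideal of the simple brace `B₁`, and it is nonzero: if `I` contains some
`(g, a)` with `a ≠ 0`, then, as `α_a` is not conjugation by `g`, the commutator of `(g, a)` with a
suitable `(h, 0)` is a nonzero element of `I` of that form. Since `B₁` is simple and not trivial,
`B₁ * B₁ = B₁`, so `B₁ × {0}` lies in its own `*`-square and hence in every `*`-product of nonzero
ideals. It is a proper nonzero ideal, because `α` is non-trivial and so `B₂ ≠ 0`. -/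

namespace SkewLeftBrace

section Identities

variable {B : Type*} [SkewLeftBrace B]

theorem mul_neg' (a b : B) : a * -b = a - a * b + a := by
  have h := mul_add_eq a b (-b)
  rw [add_neg_cancel, mul_zero'] at h
  rw [eq_neg_add_of_add_eq h.symm, neg_sub]

theorem mul_eq_add_lmap (a b : B) : a * b = a + lmap a b := by
  rw [lmap, add_neg_cancel_left]

theorem lmap_eq_bstar_add (a b : B) : lmap a b = bstar a b + b := by
  rw [lmap, bstar, sub_add_cancel]

theorem bstar_eq_zero_iff (a b : B) : bstar a b = 0 ↔ a * b = a + b := by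
  rw [bstar, sub_eq_zero, neg_add_eq_iff_eq_add]

theorem lmap_add (a x y : B) : lmap a (x + y) = lmap a x + lmap a y := by
  simp only [lmap, mul_add_eq, sub_eq_add_neg, add_assoc]

def lmapHom (a : B) : B →+ B := AddMonoidHom.mk' (lmap a) (lmap_add a)

theorem lmap_lmap (a b x : B) : lmap a (lmap b x) = lmap (a * b) x := by
  simp only [lmap, mul_add_eq, mul_neg', mul_assoc, sub_eq_add_neg, add_assoc,
    add_neg_cancel_left, neg_add_cancel_left]

theorem lmap_bstar (a b c : B) : lmap a (bstar b c) = bstar (a * b) c - bstar a c := by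
  have h := (lmapHom a).map_sub (lmap b c) c
  simp only [lmapHom, AddMonoidHom.mk'_apply] at h
  rw [show bstar b c = lmap b c - c from rfl, h, lmap_lmap, lmap_eq_bstar_add,
    lmap_eq_bstar_add a]
  simp only [sub_eq_add_neg, neg_add_rev, add_assoc, add_neg_cancel_left]

theorem add_bstar_add_neg (b a c : B) :
    b + bstar a c + -b = -bstar a b + bstar a (b + c) := by
  simp only [bstar, mul_add_eq, sub_eq_add_neg, neg_add_rev, neg_neg, add_assoc,
    add_neg_cancel_left, neg_add_cancel_left]

theorem inv_eq_neg_add_neg_bstar (x : B) : x⁻¹ = -x + -bstar x⁻¹ x := by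
  rw [bstar, inv_mul_cancel, ← zero_eq_one]
  simp only [sub_eq_add_neg, add_zero, neg_add_rev, neg_neg, neg_add_cancel_left]

-- both sides of `y ∘ b = b ∘ x`, for `y = b ∘ x ∘ b⁻`, expanded by `mul_eq_add_lmap`
theorem mul_mul_inv_eq (b x : B) :
    b * x * b⁻¹ = b + (bstar b x + x) + -b + -bstar (b * x * b⁻¹) b := by
  have h : b * x * b⁻¹ + (bstar (b * x * b⁻¹) b + b) = b + (bstar b x + x) := by
    rw [← lmap_eq_bstar_add, ← mul_eq_add_lmap, ← lmap_eq_bstar_add, ← mul_eq_add_lmap,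
      inv_mul_cancel_right]
  rw [← h]
  simp only [add_assoc, add_neg_cancel, add_zero]

end Identities

section Ideals

variable {B : Type*} [SkewLeftBrace B]

theorem isIdeal_singleton_zero : IsIdeal ({0} : Set B) where
  zero_mem := rfl
  add_mem := by rintro _ _ rfl rfl; exact add_zero 0
  neg_mem := by rintro _ rfl; exact neg_zero
  add_conj_mem := by rintro b _ rfl; rw [Set.mem_singleton_iff, add_zero, add_neg_cancel]
  mul_mem := by rintro _ _ rfl rfl; exact mul_zero' 0
  inv_mem := by rintro _ rfl; rw [Set.mem_singleton_iff, zero_eq_one, inv_one]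
  mul_conj_mem := by
    rintro b _ rfl; rw [Set.mem_singleton_iff, mul_zero', mul_inv_cancel, zero_eq_one]
  lmap_mem := by rintro a _ rfl; rw [Set.mem_singleton_iff, lmap, mul_zero', neg_add_cancel]

theorem setStar_mono {X X' Y Y' : Set B} (hX : X ⊆ X') (hY : Y ⊆ Y') :
    setStar X Y ⊆ setStar X' Y' :=
  AddSubgroup.closure_mono fun _ ⟨x, hx, y, hy, h⟩ => ⟨x, hX hx, y, hY hy, h⟩

theorem isIdeal_setStar_univ : IsIdeal (setStar (Set.univ : Set B) Set.univ) := by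
  set S : AddSubgroup B := AddSubgroup.closure
    {z : B | ∃ x ∈ (Set.univ : Set B), ∃ y ∈ (Set.univ : Set B), z = bstar x y}
  have hgen : ∀ x y : B, bstar x y ∈ S :=
    fun x y => AddSubgroup.subset_closure ⟨x, trivial, y, trivial, rfl⟩
  have hstable : ∀ f : B →+ B, (∀ x y : B, f (bstar x y) ∈ S) → ∀ z ∈ S, f z ∈ S := by
    intro f hf z hz
    refine (AddSubgroup.closure_le (K := S.comap f)).2 ?_ hz
    rintro _ ⟨x, -, y, -, rfl⟩
    exact hf x y
  have hconj : ∀ b : B, ∀ z ∈ S, b + z + -b ∈ S := by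
    intro b
    refine hstable (AddMonoidHom.mk' (fun z => b + z + -b) fun _ _ => ?_) fun x y => ?_
    · simp only [add_assoc, neg_add_cancel_left]
    · simp only [AddMonoidHom.mk'_apply, add_bstar_add_neg]
      exact S.add_mem (S.neg_mem (hgen x b)) (hgen x (b + y))
  refine ⟨S.zero_mem, fun _ _ => S.add_mem, fun _ => S.neg_mem, hconj, ?_, ?_, ?_, ?_⟩
  · intro x y hx hy
    rw [mul_eq_add_lmap, lmap_eq_bstar_add]
    exact S.add_mem hx (S.add_mem (hgen x y) hy)
  · intro x hx
    rw [inv_eq_neg_add_neg_bstar]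
    exact S.add_mem (S.neg_mem hx) (S.neg_mem (hgen x⁻¹ x))
  · intro b x hx
    rw [mul_mul_inv_eq]
    exact S.add_mem (hconj b _ (S.add_mem (hgen b x) hx)) (S.neg_mem (hgen _ b))
  · intro a
    refine hstable (lmapHom a) fun x y => ?_
    simp only [lmapHom, AddMonoidHom.mk'_apply, lmap_bstar]
    exact S.sub_mem (hgen (a * x) y) (hgen a y)

theorem setStar_univ_eq_univ (h : Simple B) (hB : ∃ a b : B, a * b ≠ a + b) :
    setStar (Set.univ : Set B) Set.univ = Set.univ := by
  obtain ⟨a, b, hab⟩ := hB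
  refine (h.2 _ isIdeal_setStar_univ).resolve_left fun h0 => hab ?_
  have hmem : bstar a b ∈ setStar (Set.univ : Set B) Set.univ :=
    AddSubgroup.subset_closure ⟨a, trivial, b, trivial, rfl⟩
  rw [h0] at hmem
  exact (bstar_eq_zero_iff a b).1 hmem

theorem subset_of_isStarProdOfNonzeroIdeals {J : Set B}
    (hJ : ∀ I : Set B, IsIdeal I → I ≠ {0} → J ⊆ I) (hJJ : J ⊆ setStar J J) {X : Set B}
    (hX : IsStarProdOfNonzeroIdeals X) : J ⊆ X := by
  induction hX with
  | ideal hI hI0 => exact hJ _ hI hI0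
  | star _ _ ihX ihY => exact hJJ.trans (setStar_mono ihX ihY)

theorem stronglyPrime_of_subset {J : Set B} (hJ0 : ∃ x ∈ J, x ≠ 0)
    (hJ : ∀ I : Set B, IsIdeal I → I ≠ {0} → J ⊆ I) (hJJ : J ⊆ setStar J J) :
    StronglyPrime B := by
  intro X hX hX0
  obtain ⟨x, hx, hx0⟩ := hJ0
  have hxX := subset_of_isStarProdOfNonzeroIdeals hJ hJJ hX hx
  rw [hX0] at hxX
  exact hx0 hxX

theorem IsIdeal.exists_ne_zero {I : Set B} (hI : IsIdeal I) (hI0 : I ≠ {0}) :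
    ∃ x ∈ I, x ≠ 0 := by
  by_contra! h
  exact hI0 (Set.eq_singleton_iff_unique_mem.2 ⟨hI.zero_mem, h⟩)

end Ideals

section Hom

variable {A C : Type*} [SkewLeftBrace A] [SkewLeftBrace C]

structure IsBraceHom (f : A → C) : Prop where
  map_add : ∀ x y, f (x + y) = f x + f y
  map_mul : ∀ x y, f (x * y) = f x * f y

namespace IsBraceHom

variable {f : A → C}

theorem map_neg (hf : IsBraceHom f) (x : A) : f (-x) = -f x :=
  (AddMonoidHom.mk' f hf.map_add).map_neg x

theorem map_inv (hf : IsBraceHom f) (x : A) : f x⁻¹ = (f x)⁻¹ :=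
  (MonoidHom.mk' f hf.map_mul).map_inv x

theorem map_zero (hf : IsBraceHom f) : f 0 = 0 :=
  (AddMonoidHom.mk' f hf.map_add).map_zero

theorem map_lmap (hf : IsBraceHom f) (a x : A) : f (lmap a x) = lmap (f a) (f x) := by
  rw [lmap, lmap, hf.map_add, hf.map_neg, hf.map_mul]

theorem map_bstar (hf : IsBraceHom f) (a x : A) : f (bstar a x) = bstar (f a) (f x) := by
  rw [bstar, bstar, sub_eq_add_neg, sub_eq_add_neg, hf.map_add, hf.map_add, hf.map_neg,
    hf.map_neg, hf.map_mul]

theorem image_setStar_subset (hf : IsBraceHom f) (X Y : Set A) :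
    f '' setStar X Y ⊆ setStar (f '' X) (f '' Y) := by
  let φ : A →+ C := AddMonoidHom.mk' f hf.map_add
  change (φ : A → C) '' setStar X Y ⊆ _
  rw [setStar, ← AddSubgroup.coe_map, AddMonoidHom.map_closure]
  refine AddSubgroup.closure_mono ?_
  rintro _ ⟨_, ⟨x, hx, y, hy, rfl⟩, rfl⟩
  exact ⟨f x, ⟨x, hx, rfl⟩, f y, ⟨y, hy, rfl⟩, hf.map_bstar x y⟩

theorem range_subset_setStar_range (hf : IsBraceHom f)
    (hA : setStar (Set.univ : Set A) Set.univ = Set.univ) :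
    Set.range f ⊆ setStar (Set.range f) (Set.range f) :=
  calc Set.range f = f '' setStar Set.univ Set.univ := by rw [hA, Set.image_univ]
    _ ⊆ setStar (f '' Set.univ) (f '' Set.univ) := hf.image_setStar_subset _ _
    _ = setStar (Set.range f) (Set.range f) := by rw [Set.image_univ]

end IsBraceHom

theorem IsIdeal.preimage {I : Set C} (hI : IsIdeal I) {f : A → C} (hf : IsBraceHom f) :
    IsIdeal (f ⁻¹' I) where
  zero_mem := by rw [Set.mem_preimage, hf.map_zero]; exact hI.zero_mem
  add_mem x y hx hy := by rw [Set.mem_preimage, hf.map_add]; exact hI.add_mem hx hy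
  neg_mem x hx := by rw [Set.mem_preimage, hf.map_neg]; exact hI.neg_mem hx
  add_conj_mem b x hx := by
    rw [Set.mem_preimage, hf.map_add, hf.map_add, hf.map_neg]; exact hI.add_conj_mem _ hx
  mul_mem x y hx hy := by rw [Set.mem_preimage, hf.map_mul]; exact hI.mul_mem hx hy
  inv_mem x hx := by rw [Set.mem_preimage, hf.map_inv]; exact hI.inv_mem hx
  mul_conj_mem b x hx := by
    rw [Set.mem_preimage, hf.map_mul, hf.map_mul, hf.map_inv]; exact hI.mul_conj_mem _ hx
  lmap_mem a x hx := by rw [Set.mem_preimage, hf.map_lmap]; exact hI.lmap_mem _ hx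

theorem range_subset_of_simple (hA : Simple A) {f : A → C} (hf : IsBraceHom f) {I : Set C}
    (hI : IsIdeal I) (hfI : ∃ x, x ≠ 0 ∧ f x ∈ I) : Set.range f ⊆ I := by
  obtain ⟨x, hx0, hxI⟩ := hfI
  rcases hA.2 _ (hI.preimage hf) with h | h
  · exact absurd (h ▸ hxI : x ∈ ({0} : Set A)) hx0
  · rintro _ ⟨y, rfl⟩
    exact (h.symm ▸ Set.mem_univ y : y ∈ f ⁻¹' I)

end Hom

def SDP.inl {B₁ B₂ : Type*} [Zero B₂] (x : B₁) : SDP B₁ B₂ := ⟨x, 0⟩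

theorem SDP.range_inl {B₁ B₂ : Type*} [Zero B₂] :
    Set.range (SDP.inl : B₁ → SDP B₁ B₂) = SDP.snd ⁻¹' {0} := by
  ext p
  constructor
  · rintro ⟨x, rfl⟩
    rfl
  · intro hp
    exact ⟨p.fst, SDP.ext rfl hp.symm⟩

namespace BraceActionHom

variable {B₁ B₂ : Type*} [SkewLeftBrace B₁] [SkewLeftBrace B₂] (α : BraceActionHom B₂ B₁)

theorem act_zero (x : B₁) : α.act 0 x = x := by
  rw [zero_eq_one, α.act_one]

theorem act_inv (a : B₂) (x : B₁) : α.act a x⁻¹ = (α.act a x)⁻¹ :=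
  (MonoidHom.mk' (α.act a) (α.act_mul a)).map_inv x

theorem isBraceHom_snd : letI := α.sdp; IsBraceHom (SDP.snd : SDP B₁ B₂ → B₂) :=
  let _ := α.sdp
  ⟨fun _ _ => rfl, fun _ _ => rfl⟩

theorem isBraceHom_inl : letI := α.sdp; IsBraceHom (SDP.inl : B₁ → SDP B₁ B₂) :=
  let _ := α.sdp
  ⟨fun _ _ => SDP.ext rfl (add_zero 0).symm,
    fun x y => SDP.ext (congrArg (x * ·) (α.act_zero y).symm) (mul_zero' 0).symm⟩

theorem isIdeal_range_inl :
    letI := α.sdp; IsIdeal (Set.range (SDP.inl : B₁ → SDP B₁ B₂)) := by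
  let _ := α.sdp
  rw [SDP.range_inl]
  exact isIdeal_singleton_zero.preimage α.isBraceHom_snd

theorem inl_mul_mul_inv_mul_inv (h : B₁) (p : SDP B₁ B₂) : letI := α.sdp;
    SDP.inl h * p * (SDP.inl h)⁻¹ * p⁻¹ =
      SDP.inl (h * p.fst * (α.act p.snd h)⁻¹ * p.fst⁻¹) := by
  let _ := α.sdp
  refine SDP.ext ?_ ?_
  · show h * α.act 0 p.fst * α.act (0 * p.snd) (α.act 0⁻¹ h⁻¹) *
      α.act (0 * p.snd * 0⁻¹) (α.act p.snd⁻¹ p.fst⁻¹) =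
        h * p.fst * (α.act p.snd h)⁻¹ * p.fst⁻¹
    simp only [zero_eq_one, one_mul, inv_one, mul_one, α.act_one, ← α.act_hom, mul_inv_cancel,
      α.act_inv]
  · show 0 * p.snd * 0⁻¹ * p.snd⁻¹ = 0
    rw [zero_eq_one, one_mul, inv_one, mul_one, mul_inv_cancel]

theorem exists_ne_zero_inl_mem
    (houter : ∀ a : B₂, a ≠ 0 → ∀ g : B₁, α.act a ≠ fun h => g⁻¹ * h * g) :
    letI := α.sdp; ∀ I : Set (SDP B₁ B₂), IsIdeal I → I ≠ {0} →
      ∃ x : B₁, x ≠ 0 ∧ SDP.inl x ∈ I := by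
  let _ := α.sdp
  intro I hI hI0
  obtain ⟨p, hpI, hp0⟩ := hI.exists_ne_zero hI0
  by_cases hp : p.snd = 0
  · have hpe : SDP.inl p.fst = p := SDP.ext rfl hp.symm
    exact ⟨p.fst, fun h => hp0 (SDP.ext h hp), hpe ▸ hpI⟩
  · obtain ⟨h, hh⟩ := Function.ne_iff.1 (houter p.snd hp p.fst)
    refine ⟨h * p.fst * (α.act p.snd h)⁻¹ * p.fst⁻¹, fun he => hh ?_, ?_⟩
    · rw [zero_eq_one, mul_inv_eq_one, mul_inv_eq_iff_eq_mul] at he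
      rw [mul_assoc, he, inv_mul_cancel_left]
    · rw [← α.inl_mul_mul_inv_mul_inv]
      exact hI.mul_mem (hI.mul_conj_mem _ hpI) (hI.inv_mem hpI)

end BraceActionHom

end SkewLeftBrace

theorem sdp_stronglyPrime_of_outer_general {B₁ B₂ : Type*} [SkewLeftBrace B₁] [SkewLeftBrace B₂]
    (h₁ : SkewLeftBrace.Simple B₁)
    (α : BraceActionHom B₂ B₁)
    (hα : ∃ (a : B₂) (x : B₁), α.act a x ≠ x)
    (houter : ∀ a : B₂, a ≠ 0 → ∀ g : B₁, α.act a ≠ fun h => g⁻¹ * h * g)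
    (hnontriv : ∃ a b : B₁, a * b ≠ a + b) :
    @SkewLeftBrace.StronglyPrime _ α.sdp ∧ ¬ @SkewLeftBrace.Simple _ α.sdp := by
  let _ := α.sdp
  have hJ := α.isIdeal_range_inl
  set J := Set.range (SDP.inl : B₁ → SDP B₁ B₂)
  have hJ0 : ∃ p ∈ J, p ≠ 0 := by
    obtain ⟨x, hx⟩ := (Set.ne_univ_iff_exists_notMem _).1 h₁.1
    exact ⟨SDP.inl x, ⟨x, rfl⟩, fun h => hx (congrArg SDP.fst h)⟩
  have hmin : ∀ I : Set (SDP B₁ B₂), IsIdeal I → I ≠ {0} → J ⊆ I := fun I hI hI0 =>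
    range_subset_of_simple h₁ α.isBraceHom_inl hI (α.exists_ne_zero_inl_mem houter I hI hI0)
  refine ⟨stronglyPrime_of_subset hJ0 hmin
    (α.isBraceHom_inl.range_subset_setStar_range (setStar_univ_eq_univ h₁ hnontriv)), ?_⟩
  rintro ⟨-, hsimple⟩
  rcases hsimple J hJ with h | h
  · obtain ⟨p, hp, hp0⟩ := hJ0
    rw [h] at hp
    exact hp0 hp
  · obtain ⟨a, x, hax⟩ := hα
    obtain ⟨y, hy⟩ : (⟨0, a⟩ : SDP B₁ B₂) ∈ J := h ▸ Set.mem_univ _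
    have ha : a = 0 := (congrArg SDP.snd hy).symm
    rw [ha] at hax
    exact hax (α.act_zero x)

/-- If `B₁`, `B₂` are simple, `α` is non-trivial, no `α_a` (for `a ≠ 0`) is an inner
automorphism of `(B₁,∘)`, and `B₁` is not a trivial skew left brace, then `B₁ ⋊_α B₂`
is strongly prime and not simple. -/
theorem sdp_stronglyPrime_of_outer {B₁ B₂ : Type*} [SkewLeftBrace B₁] [SkewLeftBrace B₂]
    (h₁ : SkewLeftBrace.Simple B₁) (h₂ : SkewLeftBrace.Simple B₂)
    (α : BraceActionHom B₂ B₁)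
    (hα : ∃ (a : B₂) (x : B₁), α.act a x ≠ x)
    (houter : ∀ a : B₂, a ≠ 0 → ∀ g : B₁, α.act a ≠ fun h => g⁻¹ * h * g)
    (hnontriv : ∃ a b : B₁, a * b ≠ a + b) :
    @SkewLeftBrace.StronglyPrime _ α.sdp ∧ ¬ @SkewLeftBrace.Simple _ α.sdp :=
  sdp_stronglyPrime_of_outer_general h₁ α hα houter hnontriv
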